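/- For every positive integer n, lex(n, P_5^{1423}) = n(n−1)/2 and lex(n, P_5^{2413}) = n(n−1)/2; that is, there is an edge-ordering of the complete graph K_n that avoids P_5^{1423}, and one that avoids P_5^{2413}. -/

import Mathlib

/-- An edge-ordered graph: a finite simple graph on vertex set `Fin nv`
together with a labeling of (potential) edges.  The edge-order is the order of
the labels; the labeling is required to be injective on the edge set via
`EOGraph.Valid`. -/
structure EOGraph where
  nv : ℕ
  graph : SimpleGraph (Fin nv)
  label : Sym2 (Fin nv) → ℕ

namespace EOGraph

/-- The labeling is injective on the edge set, hence defines a linear order on the edges. -/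
def Valid (G : EOGraph) : Prop :=
  ∀ e ∈ G.graph.edgeSet, ∀ f ∈ G.graph.edgeSet, G.label e = G.label f → e = f

/-- The number of edges of an edge-ordered graph. -/
noncomputable def edges (G : EOGraph) : ℕ := G.graph.edgeSet.ncard

/-- `G.Contains H`: some subgraph of `G`, with the edge-order induced from `G`,
is isomorphic to `H` (via a graph isomorphism preserving the relative order of edges). -/
def Contains (G H : EOGraph) : Prop :=
  ∃ f : Fin H.nv ↪ Fin G.nv,
    (∀ a b, H.graph.Adj a b → G.graph.Adj (f a) (f b)) ∧
    ∀ a b c d, H.graph.Adj a b → H.graph.Adj c d →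
      (H.label s(a, b) < H.label s(c, d) ↔ G.label s(f a, f b) < G.label s(f c, f d))

/-- `G` avoids `H` if no subgraph of `G` (with the induced edge-order) is isomorphic to `H`. -/
def Avoids (G H : EOGraph) : Prop := ¬ G.Contains H

/-- `G` avoids a family if it avoids every member. -/
def AvoidsFam (G : EOGraph) (F : Set EOGraph) : Prop := ∀ H ∈ F, G.Avoids H

/-- Isomorphism of edge-ordered graphs. -/
def Iso (G H : EOGraph) : Prop :=
  ∃ f : Fin G.nv ≃ Fin H.nv,
    (∀ a b, G.graph.Adj a b ↔ H.graph.Adj (f a) (f b)) ∧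
    ∀ a b c d, G.graph.Adj a b → G.graph.Adj c d →
      (G.label s(a, b) < G.label s(c, d) ↔ H.label s(f a, f b) < H.label s(f c, f d))

end EOGraph

/-- A simple graph `G` can avoid the family `F` if some linear order on its edges
(given by a labeling injective on the edge set) makes it into an edge-ordered graph
avoiding `F`. -/
def CanAvoid {n : ℕ} (G : SimpleGraph (Fin n)) (F : Set EOGraph) : Prop :=
  ∃ L : Sym2 (Fin n) → ℕ, (EOGraph.mk n G L).Valid ∧ (EOGraph.mk n G L).AvoidsFam F

/-- The order chromatic number of a family of edge-ordered graphs: the least chromatic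
number of a finite simple graph that cannot avoid the family (`⊤` if every finite
simple graph can avoid it). -/
noncomputable def orderChrom (F : Set EOGraph) : ℕ∞ :=
  ⨅ (n : ℕ) (G : SimpleGraph (Fin n)) (_ : ¬ CanAvoid G F), G.chromaticNumber

/-- The Turán number `lex(n, F)`: the maximum number of edges of an edge-ordered graph
on `n` vertices avoiding the family `F`. -/
noncomputable def lexFam (n : ℕ) (F : Set EOGraph) : ℕ :=
  sSup {m : ℕ | ∃ G : EOGraph, G.nv = n ∧ G.Valid ∧ G.AvoidsFam F ∧ G.edges = m}

/-- Build a symmetric labeling from a function of the (min, max) of the two endpoints. -/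
def symLabel {N : ℕ} (f : Fin N → Fin N → ℕ) : Sym2 (Fin N) → ℕ :=
  Sym2.lift ⟨fun a b => f (min a b) (max a b), fun a b => by
    show f (min a b) (max a b) = f (min b a) (max b a)
    rw [min_comm, max_comm]⟩

/-- The edge-ordered path on `k` vertices `0, 1, …, k-1`, where the edge `{i, i+1}`
gets label `l[i]`. -/
def pathEO (k : ℕ) (l : List ℕ) : EOGraph where
  nv := k
  graph := SimpleGraph.fromRel (fun a b => (a : ℕ) + 1 = (b : ℕ))
  label := symLabel fun a _ => l.getD (a : ℕ) 0

/-- The edge-ordered path `P_5^{1423}`: edge-order `ab < cd < de < bc`. -/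
def P5_1423 : EOGraph := pathEO 5 [1, 4, 2, 3]

/-- The edge-ordered path `P_5^{2413}`: edge-order `cd < ab < de < bc`. -/
def P5_2413 : EOGraph := pathEO 5 [2, 4, 1, 3]

/-!
Order the edges of `K_n` colexicographically (by larger endpoint, then by smaller endpoint).
Two edges sharing a vertex then compare like their other endpoints, so in a path `a b c d e`
with `cd < de < bc` we get `c < e` and `d < b`; now `de < bc` forces `max d e < b`, whence
`de < ab`. Both `P_5^{1423}` and `P_5^{2413}` have `cd < de < bc` and `ab < de`, so this
ordering of all `n.choose 2` edges avoids them.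
-/

def colexLabel (n : ℕ) (e : Sym2 (Fin n)) : ℕ := (e.sup : ℕ) * n + e.inf

lemma mul_add_lt_mul_add_iff {n a b c d : ℕ} (hb : b < n) (hd : d < n) :
    a * n + b < c * n + d ↔ a < c ∨ a = c ∧ b < d := by
  constructor
  · intro h
    rcases Nat.lt_trichotomy a c with hac | rfl | hca
    · exact Or.inl hac
    · exact Or.inr ⟨rfl, by omega⟩
    · nlinarith
  · rintro (hac | ⟨rfl, hbd⟩)
    · nlinarith
    · omega

namespace colexLabel

variable {n : ℕ}

lemma lt_iff {e e' : Sym2 (Fin n)} :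
    colexLabel n e < colexLabel n e' ↔ e.sup < e'.sup ∨ e.sup = e'.sup ∧ e.inf < e'.inf := by
  rw [colexLabel, colexLabel, mul_add_lt_mul_add_iff e.inf.isLt e'.inf.isLt, Fin.lt_def,
    Fin.lt_def, Fin.val_inj]

lemma injective : Function.Injective (colexLabel n) := by
  intro e e' h
  have hsup : e.sup = e'.sup := by
    by_contra hne
    rcases lt_or_gt_of_ne hne with hlt | hlt
    · exact (lt_iff.2 (Or.inl hlt)).ne h
    · exact (lt_iff.2 (Or.inl hlt)).ne h.symm
  have hinf : e.inf = e'.inf := by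
    by_contra hne
    rcases lt_or_gt_of_ne hne with hlt | hlt
    · exact (lt_iff.2 (Or.inr ⟨hsup, hlt⟩)).ne h
    · exact (lt_iff.2 (Or.inr ⟨hsup.symm, hlt⟩)).ne h.symm
  exact Sym2.inf_eq_inf_and_sup_eq_sup.1 ⟨hinf, hsup⟩

lemma mk_lt_mk_iff_left (v u w : Fin n) :
    colexLabel n s(v, u) < colexLabel n s(v, w) ↔ u < w := by
  simp only [lt_iff, Sym2.sup_mk, Sym2.inf_mk, Fin.lt_def, Fin.ext_iff, Fin.coe_max, Fin.coe_min]
  omega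

lemma sup_le_of_lt {e e' : Sym2 (Fin n)} (h : colexLabel n e < colexLabel n e') :
    e.sup ≤ e'.sup := by
  rcases lt_iff.1 h with h | ⟨h, -⟩
  exacts [h.le, h.le]

lemma lt_of_path {a b c d e : Fin n} (hbe : b ≠ e)
    (hcd : colexLabel n s(c, d) < colexLabel n s(d, e))
    (hbc : colexLabel n s(d, e) < colexLabel n s(b, c)) :
    colexLabel n s(d, e) < colexLabel n s(a, b) := by
  have hce : c < e := by
    rwa [Sym2.eq_swap, mk_lt_mk_iff_left] at hcd
  have hdb : d < b := by
    have := hcd.trans hbc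
    rwa [Sym2.eq_swap (a := b), mk_lt_mk_iff_left] at this
  have hsup : d ⊔ e ≤ b ⊔ c := sup_le_of_lt hbc
  have heb : e < b := by
    refine lt_of_le_of_ne ?_ hbe.symm
    rcases le_sup_iff.1 (le_sup_right.trans hsup) with h | h
    exacts [h, absurd h hce.not_ge]
  exact lt_iff.2 (Or.inl ((sup_lt_iff.2 ⟨hdb, heb⟩).trans_le le_sup_right))

end colexLabel

lemma pathEO_adj {k : ℕ} (l : List ℕ) {i j : Fin k} (h : (i : ℕ) + 1 = j) :
    (pathEO k l).graph.Adj i j :=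
  (SimpleGraph.fromRel_adj _ _ _).2 ⟨fun hij => by subst hij; omega, Or.inl h⟩

lemma pathEO_label {k : ℕ} (l : List ℕ) {i j : Fin k} (h : (i : ℕ) + 1 = j) :
    (pathEO k l).label s(i, j) = l.getD i 0 := by
  have hij : i ≤ j := Fin.le_def.2 (by omega)
  simp only [pathEO, symLabel, Sym2.lift_mk, min_eq_left hij]

lemma EOGraph.Contains.label_lt_of_pathEO {G : EOGraph} {k : ℕ} {l : List ℕ}
    (h : G.Contains (pathEO k l)) :
    ∃ f : Fin k ↪ Fin G.nv, ∀ i i' j j' : Fin k, (i : ℕ) + 1 = i' → (j : ℕ) + 1 = j' →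
      l.getD i 0 < l.getD j 0 → G.label s(f i, f i') < G.label s(f j, f j') := by
  obtain ⟨f, -, hf⟩ := h
  refine ⟨f, fun i i' j j' hi hj hl => (hf i i' j j' (pathEO_adj l hi) (pathEO_adj l hj)).1 ?_⟩
  rwa [pathEO_label l hi, pathEO_label l hj]

lemma canAvoid_top_pathEO_five {n : ℕ} {l : List ℕ} (hcd : l.getD 2 0 < l.getD 3 0)
    (hbc : l.getD 3 0 < l.getD 1 0) (hab : l.getD 0 0 < l.getD 3 0) :
    CanAvoid (⊤ : SimpleGraph (Fin n)) {pathEO 5 l} := by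
  refine ⟨colexLabel n, fun e _ e' _ h => colexLabel.injective h, ?_⟩
  rintro H rfl hcont
  obtain ⟨f, hf⟩ := hcont.label_lt_of_pathEO
  have hbe : f 1 ≠ f 4 := f.injective.ne (by decide)
  exact (colexLabel.lt_of_path (a := f 0) hbe (hf 2 3 3 4 rfl rfl hcd)
    (hf 3 4 1 2 rfl rfl hbc)).not_gt (hf 0 1 3 4 rfl rfl hab)

lemma SimpleGraph.ncard_edgeSet_le_choose_two {V : Type*} [Fintype V] (G : SimpleGraph V) :
    G.edgeSet.ncard ≤ (Fintype.card V).choose 2 := by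
  classical
  rw [← G.coe_edgeFinset, Set.ncard_coe_finset]
  exact G.card_edgeFinset_le_card_choose_two

lemma SimpleGraph.ncard_edgeSet_top (V : Type*) [Fintype V] :
    (⊤ : SimpleGraph V).edgeSet.ncard = (Fintype.card V).choose 2 := by
  classical
  rw [← SimpleGraph.coe_edgeFinset, Set.ncard_coe_finset,
    SimpleGraph.card_edgeFinset_top_eq_card_choose_two]

lemma lexFam_eq_choose_two_of_canAvoid_top {n : ℕ} {F : Set EOGraph}
    (h : CanAvoid (⊤ : SimpleGraph (Fin n)) F) : lexFam n F = n.choose 2 := by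
  obtain ⟨L, hvalid, havoid⟩ := h
  have hmem : n.choose 2 ∈
      {m : ℕ | ∃ G : EOGraph, G.nv = n ∧ G.Valid ∧ G.AvoidsFam F ∧ G.edges = m} :=
    ⟨⟨n, ⊤, L⟩, rfl, hvalid, havoid,
      (SimpleGraph.ncard_edgeSet_top (Fin n)).trans (by rw [Fintype.card_fin])⟩
  have hbound : n.choose 2 ∈ upperBounds
      {m : ℕ | ∃ G : EOGraph, G.nv = n ∧ G.Valid ∧ G.AvoidsFam F ∧ G.edges = m} := by
    rintro m ⟨G, rfl, -, -, rfl⟩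
    exact G.graph.ncard_edgeSet_le_choose_two.trans_eq (by rw [Fintype.card_fin])
  exact le_antisymm (csSup_le ⟨_, hmem⟩ hbound) (le_csSup ⟨_, hbound⟩ hmem)

theorem lex_P5_1423_and_2413_general (n : ℕ) :
    lexFam n {P5_1423} = n * (n - 1) / 2 ∧ lexFam n {P5_2413} = n * (n - 1) / 2 := by
  rw [← Nat.choose_two_right]
  exact ⟨lexFam_eq_choose_two_of_canAvoid_top (canAvoid_top_pathEO_five (by decide) (by decide)
      (by decide)),
    lexFam_eq_choose_two_of_canAvoid_top (canAvoid_top_pathEO_five (by decide) (by decide)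
      (by decide))⟩

/-- For every positive integer `n`,
`lex(n, P_5^{1423}) = lex(n, P_5^{2413}) = n(n-1)/2`. -/
theorem lex_P5_1423_and_2413 (n : ℕ) (hn : 1 ≤ n) :
    lexFam n {P5_1423} = n * (n - 1) / 2 ∧ lexFam n {P5_2413} = n * (n - 1) / 2 :=
  lex_P5_1423_and_2413_general n
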